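/- (Lemma 3.3) Suppose (a₁,b₁,T₁) and (a₂,b₂,T₂) are 4-chained, write G_j = G_{a_j,b_j,T_j} for j = 1,2, and let σ₁, σ₂ ∈ {−1, +1} be arbitrary signs. Then for every integer K ≥ 1 there exist an integer m ≥ K and real numbers α < β with [α, β] ⊆ [s_{m−1}(b₂,T₂), s_m(b₂,T₂)] such that for every χ ∈ [α, β]: σ₁·G₁(χ) ≤ −(1/2)·a₂·T₂·b₂^{m−1} and σ₂·G₂(χ) ≤ −(1/2)·a₂·T₂·b₂^{m−1} < 0. -/

import Mathlib

open Real Filter Set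

/-- Breakpoints `s_n(b,T) = T·π·(b^n − 1)/(b − 1)`. -/
noncomputable def brk (b T : ℝ) (n : ℕ) : ℝ := T * Real.pi * (b ^ n - 1) / (b - 1)

/-- Index of the segment containing `x ≥ 0`: the unique `m` with `s_m ≤ x < s_{m+1}`
(for `b > 1`, `T > 0`). -/
noncomputable def seg (b T x : ℝ) : ℕ := sInf {n : ℕ | x < brk b T (n + 1)}

/-- The saturated Nussbaum function `N_{a,b,T}`: on `[s_{n−1}, s_n)` (with `m = n − 1`)
it equals `(−1)^m·a·cos((χ − s_m)/(b^m·T))`, extended evenly to `χ < 0`. -/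
noncomputable def satN (a b T : ℝ) (χ : ℝ) : ℝ :=
  (-1 : ℝ) ^ (seg b T |χ|) * a *
    Real.cos ((|χ| - brk b T (seg b T |χ|)) / (b ^ (seg b T |χ|) * T))

/-- The integrated function `G_{a,b,T}(χ) = ∫_0^χ N_{a,b,T}(τ) dτ`. -/
noncomputable def satG (a b T : ℝ) (χ : ℝ) : ℝ := ∫ τ in (0:ℝ)..χ, satN a b T τ

/-- Two triples `(a₁,b₁,T₁)`, `(a₂,b₂,T₂)` are 4-chained. -/
def Chained4 (a₁ b₁ T₁ a₂ b₂ T₂ : ℝ) : Prop :=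
  0 < a₂ ∧ 1 < b₂ ∧ 0 < T₂ ∧
    b₁ = b₂ ^ 4 ∧ a₁ = (b₂ ^ 3 / (1 + b₂ + b₂ ^ 2 + b₂ ^ 3)) * a₂ ∧
    T₁ = (1 + b₂ + b₂ ^ 2 + b₂ ^ 3) * T₂

/-!
On `[s_n, s_{n+1}]` the function `G_{a,b,T}` is the half sine wave
`(-1)^n·a·b^n·T·sin((χ - s_n)/(b^n·T))`, which vanishes at every breakpoint. For 4-chained
triples, segment `n` of `G₁` is the union of segments `4n, …, 4n+3` of `G₂`, and there `G₁` has
amplitude `a₂·T₂·b₂^(4n+3)`. The parity of `n` fixes the sign of `G₁`, and `r ∈ {1, 2}` the sign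
of `G₂` on segment `4n + r`; on the middle half of that segment both sines are large enough by
Jordan's inequality `sin θ ≥ 2θ/π`.
-/

section Segments

variable {a b T : ℝ}

theorem brk_zero : brk b T 0 = 0 := by
  simp [brk]

theorem brk_add (k r : ℕ) : brk b T (k + r) = brk b T k + b ^ k * brk b T r := by
  unfold brk
  ring

theorem brk_succ (hb : b ≠ 1) (n : ℕ) : brk b T (n + 1) = brk b T n + b ^ n * T * π := by
  have hb' : b - 1 ≠ 0 := sub_ne_zero.2 hb
  rw [brk_add]
  unfold brk
  field_simp

theorem brk_strictMono (hb : 1 < b) (hT : 0 < T) : StrictMono (brk b T) :=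
  strictMono_nat_of_lt_succ fun n => by
    rw [brk_succ hb.ne']
    have : 0 < b ^ n * T * π := by positivity
    linarith

theorem brk_nonneg (hb : 1 < b) (hT : 0 < T) (n : ℕ) : 0 ≤ brk b T n := by
  simpa [brk_zero] using (brk_strictMono hb hT).monotone n.zero_le

theorem seg_eq_of_mem_Ico (hb : 1 < b) (hT : 0 < T) {x : ℝ} {n : ℕ}
    (hx : x ∈ Ico (brk b T n) (brk b T (n + 1))) : seg b T x = n := by
  refine le_antisymm (Nat.sInf_le hx.2) (le_csInf ⟨n, hx.2⟩ fun k hk => ?_)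
  by_contra! hkn
  have : brk b T (k + 1) ≤ brk b T n := (brk_strictMono hb hT).monotone hkn
  exact (hk.trans_le this).not_ge hx.1

theorem satN_eq_of_mem_Ico (hb : 1 < b) (hT : 0 < T) {x : ℝ} {n : ℕ}
    (hx : x ∈ Ico (brk b T n) (brk b T (n + 1))) :
    satN a b T x = (-1) ^ n * a * cos ((x - brk b T n) / (b ^ n * T)) := by
  rw [satN, abs_of_nonneg ((brk_nonneg hb hT n).trans hx.1), seg_eq_of_mem_Ico hb hT hx]

theorem eqOn_satN_Ioo (hb : 1 < b) (hT : 0 < T) {x : ℝ} {n : ℕ} (hx : x ≤ brk b T (n + 1)) :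
    EqOn (satN a b T) (fun τ => (-1) ^ n * a * cos ((τ - brk b T n) / (b ^ n * T)))
      (Ioo (brk b T n) x) :=
  fun _ hτ => satN_eq_of_mem_Ico hb hT ⟨hτ.1.le, hτ.2.trans_le hx⟩

theorem intervalIntegrable_satN_segment (hb : 1 < b) (hT : 0 < T) {x : ℝ} {n : ℕ}
    (hx : x ∈ Icc (brk b T n) (brk b T (n + 1))) :
    IntervalIntegrable (satN a b T) MeasureTheory.volume (brk b T n) x := by
  have hcont : Continuous fun τ => (-1) ^ n * a * cos ((τ - brk b T n) / (b ^ n * T)) := by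
    fun_prop
  refine (hcont.intervalIntegrable _ _).congr_uIoo ?_
  rw [uIoo_of_le hx.1]
  exact (eqOn_satN_Ioo hb hT hx.2).symm

theorem integral_satN_segment (hb : 1 < b) (hT : 0 < T) {x : ℝ} {n : ℕ}
    (hx : x ∈ Icc (brk b T n) (brk b T (n + 1))) :
    ∫ τ in brk b T n..x, satN a b T τ =
      (-1) ^ n * a * (b ^ n * T) * sin ((x - brk b T n) / (b ^ n * T)) := by
  have hL : b ^ n * T ≠ 0 := by positivity
  rw [intervalIntegral.integral_congr_Ioo_of_le hx.1 (eqOn_satN_Ioo hb hT hx.2),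
    intervalIntegral.integral_const_mul,
    intervalIntegral.integral_comp_sub_right (fun y => cos (y / (b ^ n * T))),
    intervalIntegral.integral_comp_div _ hL, integral_cos]
  simp only [sub_self, zero_div, sin_zero, sub_zero, smul_eq_mul]
  ring

theorem intervalIntegrable_satN_zero_brk (hb : 1 < b) (hT : 0 < T) (n : ℕ) :
    IntervalIntegrable (satN a b T) MeasureTheory.volume 0 (brk b T n) := by
  induction n with
  | zero => simp [brk_zero]
  | succ k ih =>
    exact ih.trans (intervalIntegrable_satN_segment hb hT
      ⟨(brk_strictMono hb hT).monotone k.le_succ, le_rfl⟩)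

theorem satG_eq_add_integral (hb : 1 < b) (hT : 0 < T) {x : ℝ} {n : ℕ}
    (hx : x ∈ Icc (brk b T n) (brk b T (n + 1))) :
    satG a b T x = satG a b T (brk b T n) + ∫ τ in brk b T n..x, satN a b T τ :=
  (intervalIntegral.integral_add_adjacent_intervals (intervalIntegrable_satN_zero_brk hb hT n)
    (intervalIntegrable_satN_segment hb hT hx)).symm

theorem satG_brk (hb : 1 < b) (hT : 0 < T) (n : ℕ) : satG a b T (brk b T n) = 0 := by
  induction n with
  | zero => simp [satG, brk_zero]
  | succ k ih =>
    have hk : brk b T (k + 1) ∈ Icc (brk b T k) (brk b T (k + 1)) :=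
      ⟨(brk_strictMono hb hT).monotone k.le_succ, le_rfl⟩
    have hphase : (brk b T (k + 1) - brk b T k) / (b ^ k * T) = π := by
      rw [brk_succ hb.ne']
      field_simp
      ring
    rw [satG_eq_add_integral hb hT hk, ih, integral_satN_segment hb hT hk, hphase, sin_pi]
    ring

theorem satG_eq_of_mem_Icc (hb : 1 < b) (hT : 0 < T) {x : ℝ} {n : ℕ}
    (hx : x ∈ Icc (brk b T n) (brk b T (n + 1))) :
    satG a b T x = (-1) ^ n * a * (b ^ n * T) * sin ((x - brk b T n) / (b ^ n * T)) := by
  rw [satG_eq_add_integral hb hT hx, satG_brk hb hT, zero_add, integral_satN_segment hb hT hx]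

end Segments

theorem two_div_pi_mul_le_sin {c θ : ℝ} (hc : 0 ≤ c) (hcθ : c ≤ θ) (hθc : θ ≤ π - c) :
    2 / π * c ≤ sin θ := by
  have h2π : 0 ≤ 2 / π := by positivity
  rcases le_total θ (π / 2) with h | h
  · exact (mul_le_mul_of_nonneg_left hcθ h2π).trans (mul_le_sin (hc.trans hcθ) h)
  · rw [← sin_pi_sub]
    exact (mul_le_mul_of_nonneg_left (by linarith) h2π).trans
      (mul_le_sin (by linarith) (by linarith))

theorem mul_satG_le_of_mem_window {a b T σ c x : ℝ} {n : ℕ} (ha : 0 ≤ a) (hb : 1 < b)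
    (hT : 0 < T) (hσ : σ * (-1) ^ n = -1) (hc : 0 ≤ c)
    (hx : x ∈ Icc (brk b T n + b ^ n * T * c) (brk b T n + b ^ n * T * (π - c))) :
    σ * satG a b T x ≤ -(2 / π * c * (a * b ^ n * T)) := by
  have hL : 0 < b ^ n * T := by positivity
  set θ := (x - brk b T n) / (b ^ n * T) with hθ
  have hxθ : x = brk b T n + b ^ n * T * θ := by
    rw [hθ]
    field_simp
    ring
  have hcθ : c ≤ θ := by
    rw [hθ, le_div_iff₀ hL]
    linarith [hx.1]
  have hθc : θ ≤ π - c := by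
    rw [hθ, div_le_iff₀ hL]
    linarith [hx.2]
  have hseg : x ∈ Icc (brk b T n) (brk b T (n + 1)) := by
    rw [brk_succ hb.ne', hxθ]
    constructor <;> nlinarith
  have hsin := two_div_pi_mul_le_sin hc hcθ hθc
  rw [satG_eq_of_mem_Icc hb hT hseg, ← hθ]
  calc σ * ((-1) ^ n * a * (b ^ n * T) * sin θ) = -(a * b ^ n * T * sin θ) := by
        linear_combination (a * (b ^ n * T) * sin θ) * hσ
    _ ≤ -(2 / π * c * (a * b ^ n * T)) := by
        have : 0 ≤ a * b ^ n * T := by positivity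
        nlinarith

theorem brk_pow_four {b : ℝ} (hb : 1 < b) (T : ℝ) (n : ℕ) :
    brk (b ^ 4) ((1 + b + b ^ 2 + b ^ 3) * T) n = brk b T (4 * n) := by
  have h1 : b - 1 ≠ 0 := by linarith
  have h4 : b ^ 4 - 1 ≠ 0 := (sub_pos.2 (one_lt_pow₀ hb (by norm_num))).ne'
  rw [brk, brk, pow_mul, div_eq_div_iff h4 h1]
  ring

/-- The middle half of segment `r` of `(b, T)`, measured in the phase of the coarse segment of
`(b⁴, (1 + b + b² + b³)·T)`, keeps the distance `c = π·b^r/(4·b³)` from both ends of `[0, π]`;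
Jordan's inequality turns this `c` into the factor `b^r/(2·b³)`. -/
theorem fine_window_bounds {b T : ℝ} (hb : 1 < b) (hT : 0 < T) {r : ℕ} (hr : r = 1 ∨ r = 2) :
    (1 + b + b ^ 2 + b ^ 3) * T * (π * b ^ r / (4 * b ^ 3)) ≤ brk b T r + b ^ r * T * (π / 4) ∧
      brk b T r + b ^ r * T * (π - π / 4) ≤
        (1 + b + b ^ 2 + b ^ 3) * T * (π - π * b ^ r / (4 * b ^ 3)) := by
  have hb0 : 0 < b := by linarith
  have hbrk1 : brk b T 1 = T * π := by simpa [brk_zero] using brk_succ (T := T) hb.ne' 0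
  have hbrk2 : brk b T 2 = T * π * (1 + b) := by
    rw [brk_succ hb.ne', hbrk1]
    ring
  have hb2 : b < b ^ 2 := by nlinarith
  have hb3 : b ^ 2 < b ^ 3 := by nlinarith
  have hb4 : b ^ 3 < b ^ 4 := by nlinarith
  have hb5 : b ^ 4 < b ^ 5 := by nlinarith
  rcases hr with rfl | rfl
  · rw [hbrk1]
    constructor <;> field_simp <;> nlinarith
  · rw [hbrk2]
    constructor <;> field_simp <;> nlinarith

theorem mul_satG_chained_le_of_mem_fine_window {a b T σ χ : ℝ} {n r : ℕ} (ha : 0 ≤ a)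
    (hb : 1 < b) (hT : 0 < T) (hσ : σ * (-1) ^ n = -1) (hr : r = 1 ∨ r = 2)
    (hχ : χ ∈ Icc (brk b T (4 * n + r) + b ^ (4 * n + r) * T * (π / 4))
      (brk b T (4 * n + r) + b ^ (4 * n + r) * T * (π - π / 4))) :
    σ * satG (b ^ 3 / (1 + b + b ^ 2 + b ^ 3) * a) (b ^ 4) ((1 + b + b ^ 2 + b ^ 3) * T) χ ≤
      -(1 / 2) * (a * T * b ^ (4 * n + r)) := by
  have hc : 0 ≤ π * b ^ r / (4 * b ^ 3) := by positivity
  have hcoarse : χ ∈ Icc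
      (brk (b ^ 4) ((1 + b + b ^ 2 + b ^ 3) * T) n +
        (b ^ 4) ^ n * ((1 + b + b ^ 2 + b ^ 3) * T) * (π * b ^ r / (4 * b ^ 3)))
      (brk (b ^ 4) ((1 + b + b ^ 2 + b ^ 3) * T) n +
        (b ^ 4) ^ n * ((1 + b + b ^ 2 + b ^ 3) * T) * (π - π * b ^ r / (4 * b ^ 3))) := by
    rw [brk_add, pow_add] at hχ
    rw [brk_pow_four hb, ← pow_mul]
    have hb4n : 0 ≤ b ^ (4 * n) := by positivity
    have hlo := mul_le_mul_of_nonneg_left (fine_window_bounds hb hT hr).1 hb4n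
    have hhi := mul_le_mul_of_nonneg_left (fine_window_bounds hb hT hr).2 hb4n
    constructor <;> linarith [hχ.1, hχ.2]
  have hG := mul_satG_le_of_mem_window (a := b ^ 3 / (1 + b + b ^ 2 + b ^ 3) * a)
    (by positivity) (one_lt_pow₀ hb (by norm_num)) (by positivity) hσ hc hcoarse
  convert hG using 2
  field_simp
  ring

theorem Chained4.exists_common_window {a₁ b₁ T₁ a₂ b₂ T₂ σ₁ σ₂ : ℝ} {n r : ℕ}
    (h : Chained4 a₁ b₁ T₁ a₂ b₂ T₂) (hσ₁ : σ₁ * (-1) ^ n = -1) (hσ₂ : σ₂ * (-1) ^ r = -1)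
    (hr : r = 1 ∨ r = 2) :
    ∃ α β : ℝ, α < β ∧
      Icc α β ⊆ Icc (brk b₂ T₂ (4 * n + r)) (brk b₂ T₂ (4 * n + r + 1)) ∧
      ∀ χ ∈ Icc α β,
        σ₁ * satG a₁ b₁ T₁ χ ≤ -(1 / 2) * (a₂ * T₂ * b₂ ^ (4 * n + r)) ∧
        σ₂ * satG a₂ b₂ T₂ χ ≤ -(1 / 2) * (a₂ * T₂ * b₂ ^ (4 * n + r)) := by
  obtain ⟨ha, hb, hT, rfl, rfl, rfl⟩ := h
  have hL : 0 < b₂ ^ (4 * n + r) * T₂ := by positivity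
  have hπ := pi_pos
  refine ⟨brk b₂ T₂ (4 * n + r) + b₂ ^ (4 * n + r) * T₂ * (π / 4),
    brk b₂ T₂ (4 * n + r) + b₂ ^ (4 * n + r) * T₂ * (π - π / 4), by nlinarith, ?_,
    fun χ hχ => ⟨mul_satG_chained_le_of_mem_fine_window ha.le hb hT hσ₁ hr hχ, ?_⟩⟩
  · rw [brk_succ hb.ne']
    exact Icc_subset_Icc (by nlinarith) (by nlinarith)
  · have hσ₂' : σ₂ * (-1) ^ (4 * n + r) = -1 := by
      rw [pow_add, pow_mul]
      norm_num [hσ₂]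
    have hG := mul_satG_le_of_mem_window ha.le hb hT hσ₂' (by positivity : 0 ≤ π / 4) hχ
    convert hG using 2
    field_simp
    ring

theorem chained_signed_common_interval_general (a₁ b₁ T₁ a₂ b₂ T₂ : ℝ)
    (h : Chained4 a₁ b₁ T₁ a₂ b₂ T₂) (σ₁ σ₂ : ℝ)
    (hσ₁ : σ₁ = 1 ∨ σ₁ = -1) (hσ₂ : σ₂ = 1 ∨ σ₂ = -1) (K : ℕ) :
    ∃ m : ℕ, K ≤ m ∧ ∃ α β : ℝ, α < β ∧
      Set.Icc α β ⊆ Set.Icc (brk b₂ T₂ (m - 1)) (brk b₂ T₂ m) ∧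
      (∀ χ ∈ Set.Icc α β,
        σ₁ * satG a₁ b₁ T₁ χ ≤ -(1 / 2) * (a₂ * T₂ * b₂ ^ (m - 1)) ∧
        σ₂ * satG a₂ b₂ T₂ χ ≤ -(1 / 2) * (a₂ * T₂ * b₂ ^ (m - 1))) ∧
      -(1 / 2) * (a₂ * T₂ * b₂ ^ (m - 1)) < 0 := by
  obtain ⟨n, hKn, hσ₁n⟩ : ∃ n : ℕ, K ≤ 4 * n ∧ σ₁ * (-1) ^ n = -1 := by
    rcases hσ₁ with rfl | rfl
    · exact ⟨2 * K + 1, by omega, by simp [pow_succ, pow_mul]⟩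
    · exact ⟨2 * K, by omega, by simp [pow_mul]⟩
  obtain ⟨r, hr, hσ₂r⟩ : ∃ r : ℕ, (r = 1 ∨ r = 2) ∧ σ₂ * (-1) ^ r = -1 := by
    rcases hσ₂ with rfl | rfl
    · exact ⟨1, by norm_num, by norm_num⟩
    · exact ⟨2, by norm_num, by norm_num⟩
  obtain ⟨α, β, hαβ, hsub, hbound⟩ := h.exists_common_window hσ₁n hσ₂r hr
  obtain ⟨ha, hb, hT, -⟩ := h
  refine ⟨4 * n + r + 1, by omega, α, β, hαβ, hsub, hbound, ?_⟩
  show -(1 / 2) * (a₂ * T₂ * b₂ ^ (4 * n + r)) < 0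
  have : 0 < a₂ * T₂ * b₂ ^ (4 * n + r) := by positivity
  linarith

/-- Lemma 3.3: for any signs `σ₁, σ₂` and any `K`, there is a fast
segment index `m ≥ K` and a nontrivial subinterval `[α, β]` of it on which both
`σ₁·G₁` and `σ₂·G₂` are below `−(1/2)·a₂·T₂·b₂^{m−1} < 0`. -/
theorem chained_signed_common_interval (a₁ b₁ T₁ a₂ b₂ T₂ : ℝ)
    (h : Chained4 a₁ b₁ T₁ a₂ b₂ T₂) (σ₁ σ₂ : ℝ)
    (hσ₁ : σ₁ = 1 ∨ σ₁ = -1) (hσ₂ : σ₂ = 1 ∨ σ₂ = -1) (K : ℕ) (hK : 1 ≤ K) :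
    ∃ m : ℕ, K ≤ m ∧ ∃ α β : ℝ, α < β ∧
      Set.Icc α β ⊆ Set.Icc (brk b₂ T₂ (m - 1)) (brk b₂ T₂ m) ∧
      (∀ χ ∈ Set.Icc α β,
        σ₁ * satG a₁ b₁ T₁ χ ≤ -(1 / 2) * (a₂ * T₂ * b₂ ^ (m - 1)) ∧
        σ₂ * satG a₂ b₂ T₂ χ ≤ -(1 / 2) * (a₂ * T₂ * b₂ ^ (m - 1))) ∧
      -(1 / 2) * (a₂ * T₂ * b₂ ^ (m - 1)) < 0 :=
  chained_signed_common_interval_general a₁ b₁ T₁ a₂ b₂ T₂ h σ₁ σ₂ hσ₁ hσ₂ K
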